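/- If a[id] is well-formed in λυ′ (more generally, if a[⇑ⁿ id] is well-formed for n ≥ 0), then a[id] (resp. a[⇑ⁿ id]) and a have a common υ′-reduct. -/

import Mathlib

abbrev Var := ℕ

mutual
/-- Terms of the calculus λυ′: named variables, De Bruijn index 1,
application, abstraction, and explicit substitution `a[s]`. -/
inductive UTm : Type
  | fvar : Var → UTm
  | one : UTm
  | app : UTm → UTm → UTm
  | lam : UTm → UTm
  | sub : UTm → USb → UTm
/-- Substitutions of λυ′: `b/`, `↑`, `id`, `⇑s`. -/
inductive USb : Type
  | slash : UTm → USb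
  | up : USb
  | id : USb
  | lift : USb → USb
end

mutual
/-- One-step υ′-reduction (λυ′ without Beta), closed under compatible contexts. -/
inductive UStep : UTm → UTm → Prop
  | app {a b s} : UStep (.sub (.app a b) s) (.app (.sub a s) (.sub b s))
  | lam {a s} : UStep (.sub (.lam a) s) (.lam (.sub a (.lift s)))
  | var {b} : UStep (.sub .one (.slash b)) b
  | shift {a b} : UStep (.sub (.sub a .up) (.slash b)) a
  | varId : UStep (.sub .one .id) .one
  | shiftId {a} : UStep (.sub (.sub a .up) .id) (.sub a .up)
  | varLift {s} : UStep (.sub .one (.lift s)) .one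
  | shiftLift {a s} : UStep (.sub (.sub a .up) (.lift s)) (.sub (.sub a s) .up)
  | appL {a a' b} : UStep a a' → UStep (.app a b) (.app a' b)
  | appR {a b b'} : UStep b b' → UStep (.app a b) (.app a b')
  | lamC {a a'} : UStep a a' → UStep (.lam a) (.lam a')
  | subL {a a' s} : UStep a a' → UStep (.sub a s) (.sub a' s)
  | subR {a : UTm} {s s'} : USStep s s' → UStep (.sub a s) (.sub a s')
/-- One-step υ′-reduction inside substitutions. -/
inductive USStep : USb → USb → Prop
  | slash {b b'} : UStep b b' → USStep (.slash b) (.slash b')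
  | lift {s s' : USb} : USStep s s' → USStep (.lift s) (.lift s')
end

mutual
/-- The typing judgement `n ⊢ a` of λυ′. -/
inductive UJ : ℕ → UTm → Prop
  | fvar (x : Var) : UJ 0 (.fvar x)
  | one (n : ℕ) : UJ (n + 1) .one
  | app {n a b} : UJ n a → UJ n b → UJ n (.app a b)
  | lam {n a} : UJ (n + 1) a → UJ n (.lam a)
  | sub {n m s a} : USJ n s m → UJ m a → UJ n (.sub a s)
/-- The judgement `n ⊢ s ▷ m` of λυ′. -/
inductive USJ : ℕ → USb → ℕ → Prop
  | slash {n b} : UJ n b → USJ n (.slash b) (n + 1)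
  | up (n : ℕ) : USJ (n + 1) .up n
  | id (n : ℕ) : USJ (n + 1) .id (n + 1)
  | lift {n m s} : USJ n s m → USJ (n + 1) (.lift s) (m + 1)
end

/-- `⇑ⁿ id`. -/
def liftN : ℕ → USb
  | 0 => .id
  | n + 1 => .lift (liftN n)

/-!
Pushing all explicit substitutions inward gives a function `UTm.nf` with `a ↠ a.nf`. On a term
of level `m` its value is a normal form of level `m`, built from variables, `1`, application,
abstraction and `b[↑]`. Pushing `⇑ⁿ id` into such a normal form leaves it unchanged as soon as
`n < m`, and this is exactly what the typing of `a[⇑ⁿ id]` guarantees. Hence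
`a[⇑ⁿ id] ↠ a.nf[⇑ⁿ id] ↠ a.nf` and `a ↠ a.nf`.
-/

open Relation

local infix:50 " ↠ " => ReflTransGen UStep
local infix:50 " ↠ₛ " => ReflTransGen USStep

section Congruence

variable {a a' b b' : UTm} {s s' : USb}

theorem reduces_app (ha : a ↠ a') (hb : b ↠ b') : .app a b ↠ .app a' b' :=
  (ha.lift (UTm.app · b) fun _ _ => UStep.appL).trans (hb.lift (UTm.app a') fun _ _ => UStep.appR)

theorem reduces_lam (ha : a ↠ a') : .lam a ↠ .lam a' :=
  ha.lift UTm.lam fun _ _ => UStep.lamC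

theorem reduces_sub (ha : a ↠ a') (hs : s ↠ₛ s') : .sub a s ↠ .sub a' s' :=
  (ha.lift (UTm.sub · s) fun _ _ => UStep.subL).trans (hs.lift (UTm.sub a') fun _ _ => UStep.subR)

theorem reducesSub_slash (hb : b ↠ b') : .slash b ↠ₛ .slash b' :=
  hb.lift USb.slash fun _ _ => USStep.slash

theorem reducesSub_lift (hs : s ↠ₛ s') : .lift s ↠ₛ .lift s' :=
  hs.lift USb.lift fun _ _ => USStep.lift

end Congruence

/-- Contracts `N[S]` at the root and pushes `S` on into the result, assuming `N` is normal;
on every other shape it returns `N[S]` unchanged. -/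
def UTm.pushSub : UTm → USb → UTm
  | .app a b, S => .app (a.pushSub S) (b.pushSub S)
  | .lam a, S => .lam (a.pushSub (.lift S))
  | .one, .slash b => b
  | .one, .id => .one
  | .one, .lift _ => .one
  | .sub a .up, .slash _ => a
  | .sub a .up, .id => .sub a .up
  | .sub a .up, .lift s => .sub (a.pushSub s) .up
  | N, S => .sub N S

mutual
def UTm.nf : UTm → UTm
  | .fvar x => .fvar x
  | .one => .one
  | .app a b => .app a.nf b.nf
  | .lam a => .lam a.nf
  | .sub a s => a.nf.pushSub s.nf
def USb.nf : USb → USb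
  | .slash b => .slash b.nf
  | .up => .up
  | .id => .id
  | .lift s => .lift s.nf
end

theorem UTm.reduces_pushSub : ∀ (N : UTm) (S : USb), .sub N S ↠ N.pushSub S
  | .app a b, S => .head .app (reduces_app (reduces_pushSub a S) (reduces_pushSub b S))
  | .lam a, S => .head .lam (reduces_lam (reduces_pushSub a (.lift S)))
  | .one, .slash _ => .single .var
  | .one, .id => .single .varId
  | .one, .lift _ => .single .varLift
  | .one, .up => .refl
  | .sub _ .up, .slash _ => .single .shift
  | .sub _ .up, .id => .single .shiftId
  | .sub a .up, .lift s => .head .shiftLift (reduces_sub (reduces_pushSub a s) .refl)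
  | .sub _ .up, .up => .refl
  | .sub _ (.slash _), _ => .refl
  | .sub _ .id, _ => .refl
  | .sub _ (.lift _), _ => .refl
  | .fvar _, _ => .refl

mutual
theorem UTm.reduces_nf : ∀ a : UTm, a ↠ a.nf
  | .fvar _ => .refl
  | .one => .refl
  | .app a b => reduces_app a.reduces_nf b.reduces_nf
  | .lam a => reduces_lam a.reduces_nf
  | .sub a s => (reduces_sub a.reduces_nf s.reduces_nf).trans (a.nf.reduces_pushSub s.nf)
theorem USb.reduces_nf : ∀ s : USb, s ↠ₛ s.nf
  | .slash b => reducesSub_slash b.reduces_nf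
  | .up => .refl
  | .id => .refl
  | .lift s => reducesSub_lift s.reduces_nf
end

/-- `TypedNF m N`: `N` is a υ′-normal form with `m ⊢ N`. -/
inductive UTm.TypedNF : ℕ → UTm → Prop
  | fvar (x : Var) : TypedNF 0 (.fvar x)
  | one (m : ℕ) : TypedNF (m + 1) .one
  | app {m a b} : TypedNF m a → TypedNF m b → TypedNF m (.app a b)
  | lam {m a} : TypedNF (m + 1) a → TypedNF m (.lam a)
  | subUp {m a} : TypedNF m a → TypedNF (m + 1) (.sub a .up)

inductive USb.TypedNF : ℕ → USb → ℕ → Prop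
  | slash {m b} : b.TypedNF m → TypedNF m (.slash b) (m + 1)
  | up (m : ℕ) : TypedNF (m + 1) .up m
  | id (m : ℕ) : TypedNF (m + 1) .id (m + 1)
  | lift {m m' s} : TypedNF m s m' → TypedNF (m + 1) (.lift s) (m' + 1)

theorem UTm.TypedNF.pushSub {m m' : ℕ} {N : UTm} {S : USb} (hN : N.TypedNF m')
    (hS : S.TypedNF m m') : (N.pushSub S).TypedNF m := by
  induction hN generalizing m S with
  | fvar x => cases hS; exact .subUp (.fvar x)
  | one k =>
    cases hS with
    | slash hb => exact hb
    | up => exact .subUp (.one k)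
    | id => exact .one k
    | lift => exact .one _
  | app _ _ iha ihb => exact .app (iha hS) (ihb hS)
  | lam _ ih => exact .lam (ih hS.lift)
  | subUp ha ih =>
    cases hS with
    | slash => exact ha
    | up => exact .subUp (.subUp ha)
    | id => exact .subUp ha
    | lift hs => exact .subUp (ih hs)

mutual
theorem UJ.typedNF_nf : ∀ {m : ℕ} {a : UTm}, UJ m a → a.nf.TypedNF m
  | _, _, .fvar x => .fvar x
  | _, _, .one k => .one k
  | _, _, .app ha hb => .app ha.typedNF_nf hb.typedNF_nf
  | _, _, .lam ha => .lam ha.typedNF_nf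
  | _, _, .sub hs ha => ha.typedNF_nf.pushSub hs.typedNF_nf
theorem USJ.typedNF_nf : ∀ {m m' : ℕ} {s : USb}, USJ m s m' → s.nf.TypedNF m m'
  | _, _, _, .slash hb => .slash hb.typedNF_nf
  | _, _, _, .up k => .up k
  | _, _, _, .id k => .id k
  | _, _, _, .lift hs => .lift hs.typedNF_nf
end

theorem UTm.TypedNF.pushSub_liftN {m : ℕ} {N : UTm} (hN : N.TypedNF m) :
    ∀ {n : ℕ}, n < m → N.pushSub (liftN n) = N := by
  induction hN with
  | fvar => intro n hn; omega
  | one => intro n _; cases n <;> rfl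
  | app _ _ iha ihb => intro n hn; exact congrArg₂ UTm.app (iha hn) (ihb hn)
  | lam _ ih => intro n hn; exact congrArg UTm.lam (ih (n := n + 1) (by omega))
  | subUp _ ih =>
    intro n hn
    cases n with
    | zero => rfl
    | succ k => exact congrArg (UTm.sub · .up) (ih (by omega))

theorem USJ.liftN_inv : ∀ {n m m' : ℕ}, USJ m (liftN n) m' → m' = m ∧ n < m
  | 0, _, _, .id _ => ⟨rfl, by omega⟩
  | _ + 1, _, _, .lift hs => by obtain ⟨rfl, _⟩ := hs.liftN_inv; omega

/-- If `a[⇑ⁿ id]` is well-formed (`n ≥ 0`, in particular `a[id]`), then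
`a[⇑ⁿ id]` and `a` have a common υ′-reduct. -/
theorem sub_liftN_id_common_reduct (n : ℕ) (a : UTm)
    (hwf : ∃ m, UJ m (.sub a (liftN n))) :
    ∃ c : UTm, Relation.ReflTransGen UStep (.sub a (liftN n)) c ∧
      Relation.ReflTransGen UStep a c := by
  obtain ⟨_, hwf⟩ := hwf
  cases hwf with | sub hs ha => ?_
  obtain ⟨rfl, hn⟩ := hs.liftN_inv
  refine ⟨a.nf, ?_, a.reduces_nf⟩
  calc UTm.sub a (liftN n) ↠ .sub a.nf (liftN n) := reduces_sub a.reduces_nf .refl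
    _ ↠ a.nf.pushSub (liftN n) := a.nf.reduces_pushSub _
    _ = a.nf := ha.typedNF_nf.pushSub_liftN hn
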